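/- Fix τ > 0, 0 < K₁ < 1, and p with 1 ≤ p < ∞. Define Θ_{−τ,b}(λ) := λ³/6 + 2^{−2/3} τ λ² − 2^{−1/3}(2σ + τ² − s) λ (which is the phase with endpoint b = σ + τ² − s), K(s) := τ³/3 − sτ, and the contour parametrization λ(u) := 2^{1/3}τ + u(1/2 + (2/√3) i). Then there exist C > 0 and σ₀ > 0 such that for all σ ≥ σ₀ and all real s with s ≤ K₁(σ + τ²): ( ∫_0^∞ |exp( Θ_{−τ,b}(λ(u)) + K(s) )|^p du )^{1/p} ≤ C e^{−2τ(1−K₁)σ}, and also sup_{u ≥ 0} |exp( Θ_{−τ,b}(λ(u)) + K(s) )| ≤ C e^{−2τ(1−K₁)σ}. Thus this jump entry of the tacnode Riemann–Hilbert problem tends to zero exponentially fast in every L^p norm as σ → +∞. -/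

import Mathlib

open MeasureTheory Set Complex

/-- The phase `Θ_{−τ,b}(λ) = λ³/6 + 2^{−2/3}τλ² − 2^{−1/3}(2σ + τ² − s)λ`,
i.e. the phase with endpoint `b = σ + τ² − s`. -/
noncomputable def ThetaB (τ σ s : ℝ) (l : ℂ) : ℂ :=
  l ^ 3 / 6 + ((2 : ℝ) ^ (-(2 : ℝ) / 3) * τ : ℝ) * l ^ 2
    - ((2 : ℝ) ^ (-(1 : ℝ) / 3) * (2 * σ + τ ^ 2 - s) : ℝ) * l

/-- The conjugation constant `K(s) = τ³/3 − sτ`. -/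
noncomputable def Kconst (τ s : ℝ) : ℝ := τ ^ 3 / 3 - s * τ

/-- The contour parametrization `λ(u) = 2^{1/3}τ + u(1/2 + (2/√3)i)`, `u ≥ 0`. -/
noncomputable def lamR3 (τ u : ℝ) : ℂ :=
  ((2 : ℝ) ^ ((1 : ℝ) / 3) * τ : ℝ) + u * (1 / 2 + (2 / Real.sqrt 3 : ℝ) * Complex.I)

/-!
Along the ray `λ(u)`, the real part of `Θ_{−τ,b} + K(s)` is a cubic in `u`. Its constant term
`2τ³/3 − 2στ` does not depend on `s`, since `K(s)` cancels the `s`-dependence of `Θ_{−τ,b}` at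
`λ(0) = 2^{1/3}τ`; its linear coefficient is a positive multiple of `2τ² − 2σ + s`, which is
`≤ −1` once `σ` is large and `s ≤ K₁(σ + τ²)`; its quadratic and cubic coefficients are
negative. Hence `|e^{Θ_{−τ,b} + K(s)}| ≤ e^{2τ³/3 − 2στ} e^{−u/4}`, which gives the sup bound
at once and the `Lᵖ` bound after integrating the exponential; finally
`e^{−2στ} ≤ e^{−2τ(1−K₁)σ}`.
-/

lemma re_thetaB_lamR3_add_Kconst (τ σ s u : ℝ) :
    (ThetaB τ σ s (lamR3 τ u) + (Kconst τ s : ℂ)).re =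
      2 / 3 * τ ^ 3 - 2 * σ * τ + (2 : ℝ) ^ ((2 : ℝ) / 3) / 4 * (2 * τ ^ 2 - 2 * σ + s) * u
        - 13 / 12 * (2 : ℝ) ^ ((1 : ℝ) / 3) * τ * u ^ 2 - 5 / 16 * u ^ 3 := by
  set r : ℝ := (2 : ℝ) ^ ((1 : ℝ) / 3) with hr
  have hr3 : r ^ 3 = 2 := by
    rw [hr, ← Real.rpow_natCast, ← Real.rpow_mul zero_le_two]
    norm_num
  have hr2 : (2 : ℝ) ^ ((2 : ℝ) / 3) = r ^ 2 := by
    rw [hr, ← Real.rpow_natCast, ← Real.rpow_mul zero_le_two]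
    norm_num
  have h23 : (2 : ℝ) ^ (-(2 : ℝ) / 3) = r / 2 := by
    rw [show -(2 : ℝ) / 3 = 1 / 3 - 1 by norm_num, Real.rpow_sub two_pos, Real.rpow_one]
  have h13 : (2 : ℝ) ^ (-(1 : ℝ) / 3) = r ^ 2 / 2 := by
    rw [show -(1 : ℝ) / 3 = 2 / 3 - 1 by norm_num, Real.rpow_sub two_pos, Real.rpow_one, hr2]
  have hs3 : Real.sqrt 3 ^ 2 = 3 := Real.sq_sqrt (by norm_num)
  have hs0 : Real.sqrt 3 ≠ 0 := by positivity
  simp only [ThetaB, lamR3, Kconst, h23, h13, hr2, ← hr]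
  simp only [Complex.add_re, Complex.sub_re, Complex.mul_re, Complex.mul_im, Complex.add_im,
    Complex.ofReal_re, Complex.ofReal_im, Complex.I_re, Complex.I_im,
    Complex.div_re, Complex.div_im, Complex.normSq_apply, pow_succ, pow_zero, one_mul,
    Complex.one_re, Complex.one_im, Complex.re_ofNat, Complex.im_ofNat]
  field_simp
  ring_nf
  rw [show Real.sqrt 3 ^ 3 = 3 * Real.sqrt 3 by rw [pow_succ, hs3], hr3]
  ring

lemma re_thetaB_lamR3_add_Kconst_le {τ σ s u : ℝ} (hτ : 0 ≤ τ) (hu : 0 ≤ u)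
    (hlin : 2 * τ ^ 2 - 2 * σ + s ≤ -1) :
    (ThetaB τ σ s (lamR3 τ u) + (Kconst τ s : ℂ)).re ≤ 2 / 3 * τ ^ 3 - 2 * σ * τ - u / 4 := by
  have hq : (1 : ℝ) ≤ (2 : ℝ) ^ ((2 : ℝ) / 3) := Real.one_le_rpow one_le_two (by norm_num)
  have hlin' : (2 : ℝ) ^ ((2 : ℝ) / 3) / 4 * (2 * τ ^ 2 - 2 * σ + s) ≤ -1 / 4 := by nlinarith
  have hquad : 0 ≤ 13 / 12 * (2 : ℝ) ^ ((1 : ℝ) / 3) * τ * u ^ 2 := by positivity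
  rw [re_thetaB_lamR3_add_Kconst]
  nlinarith [mul_le_mul_of_nonneg_right hlin' hu, pow_nonneg hu 3]

lemma linear_coeff_le_neg_one {τ σ s K₁ : ℝ} (hK₁ : K₁ < 1) (hσ1 : 1 ≤ σ)
    (hσ : 3 * τ ^ 2 ≤ (1 - K₁) * σ) (hs : s ≤ K₁ * (σ + τ ^ 2)) :
    2 * τ ^ 2 - 2 * σ + s ≤ -1 := by
  nlinarith [sq_nonneg τ]

lemma norm_exp_jump_le {τ σ s u : ℝ} (hτ : 0 ≤ τ) (hu : 0 ≤ u)
    (hlin : 2 * τ ^ 2 - 2 * σ + s ≤ -1) :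
    ‖Complex.exp (ThetaB τ σ s (lamR3 τ u) + (Kconst τ s : ℂ))‖ ≤
      Real.exp (2 / 3 * τ ^ 3 - 2 * σ * τ) * Real.exp (-(1 / 4) * u) := by
  rw [Complex.norm_exp, ← Real.exp_add, Real.exp_le_exp]
  linarith [re_thetaB_lamR3_add_Kconst_le hτ hu hlin]

lemma nonneg_of_forall_le_mul_exp {f : ℝ → ℝ} {A b : ℝ}
    (hf : ∀ u > 0, 0 ≤ f u ∧ f u ≤ A * Real.exp (-b * u)) : 0 ≤ A :=
  nonneg_of_mul_nonneg_left ((hf 1 one_pos).1.trans (hf 1 one_pos).2) (Real.exp_pos _)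

lemma integral_Ioi_rpow_le_of_le_mul_exp {f : ℝ → ℝ} {A b p : ℝ} (hb : 0 < b) (hp : 0 < p)
    (hf : ∀ u > 0, 0 ≤ f u ∧ f u ≤ A * Real.exp (-b * u)) :
    ∫ u in Ioi (0 : ℝ), f u ^ p ≤ A ^ p / (p * b) := by
  have hA : 0 ≤ A := nonneg_of_forall_le_mul_exp hf
  have hpow : ∀ u, (A * Real.exp (-b * u)) ^ p = A ^ p * Real.exp (-(p * b) * u) := fun u => by
    rw [Real.mul_rpow hA (Real.exp_pos _).le, ← Real.exp_mul]
    ring_nf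
  calc ∫ u in Ioi (0 : ℝ), f u ^ p
      ≤ ∫ u in Ioi (0 : ℝ), A ^ p * Real.exp (-(p * b) * u) := by
        refine integral_mono_of_nonneg ?_ ?_ ?_
        · filter_upwards [ae_restrict_mem measurableSet_Ioi] with u hu
          exact Real.rpow_nonneg (hf u hu).1 p
        · exact (exp_neg_integrableOn_Ioi 0 (by positivity)).const_mul _
        · filter_upwards [ae_restrict_mem measurableSet_Ioi] with u hu
          rw [← hpow]
          exact Real.rpow_le_rpow (hf u hu).1 (hf u hu).2 hp.le
    _ = A ^ p / (p * b) := by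
        rw [integral_const_mul, integral_exp_mul_Ioi (by nlinarith) 0]
        simp [div_eq_mul_inv]

lemma rpow_integral_Ioi_rpow_le_of_le_mul_exp {f : ℝ → ℝ} {A b p : ℝ} (hb : 0 < b) (hb1 : b ≤ 1)
    (hp : 1 ≤ p) (hf : ∀ u > 0, 0 ≤ f u ∧ f u ≤ A * Real.exp (-b * u)) :
    (∫ u in Ioi (0 : ℝ), f u ^ p) ^ (1 / p) ≤ A / b := by
  have hp0 : 0 < p := one_pos.trans_le hp
  have hA : 0 ≤ A := nonneg_of_forall_le_mul_exp hf
  have hint : ∫ u in Ioi (0 : ℝ), f u ^ p ≤ (A / b) ^ p :=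
    calc ∫ u in Ioi (0 : ℝ), f u ^ p ≤ A ^ p / (p * b) :=
          integral_Ioi_rpow_le_of_le_mul_exp hb hp0 hf
      _ ≤ A ^ p * b⁻¹ := by
          rw [div_eq_mul_inv]
          gcongr
          nlinarith
      _ ≤ A ^ p * b⁻¹ ^ p := by
          gcongr
          exact Real.self_le_rpow_of_one_le (one_le_inv₀ hb |>.mpr hb1) hp
      _ = (A / b) ^ p := by rw [div_eq_mul_inv, Real.mul_rpow hA (inv_nonneg.mpr hb.le)]
  calc (∫ u in Ioi (0 : ℝ), f u ^ p) ^ (1 / p)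
      ≤ ((A / b) ^ p) ^ (1 / p) := by
        gcongr
        exact integral_nonneg_of_ae <| by
          filter_upwards [ae_restrict_mem measurableSet_Ioi] with u hu
          exact Real.rpow_nonneg (hf u hu).1 p
    _ = A / b := by rw [one_div, Real.rpow_rpow_inv (by positivity) hp0.ne']

/-- The jump entry `e^{Θ_{−τ,b}(λ) + K(s)}` of the tacnode Riemann–Hilbert problem tends to
zero exponentially fast in every `L^p` norm as `σ → +∞`: for fixed `τ > 0`, `0 < K₁ < 1`
and `1 ≤ p < ∞` there are `C > 0` and `σ₀ > 0` such that for all `σ ≥ σ₀` and all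
`s ≤ K₁(σ + τ²)`, both the `L^p` norm on the contour and the sup over the contour are
bounded by `C e^{−2τ(1−K₁)σ}`. -/
theorem jump_R3_exponentially_suppressed (τ K₁ p : ℝ)
    (hτ : 0 < τ) (hK₁0 : 0 < K₁) (hK₁1 : K₁ < 1) (hp : 1 ≤ p) :
    ∃ C > (0 : ℝ), ∃ σ₀ > (0 : ℝ), ∀ σ : ℝ, σ₀ ≤ σ → ∀ s : ℝ, s ≤ K₁ * (σ + τ ^ 2) →
      ((∫ u in Ioi (0 : ℝ),
            ‖Complex.exp (ThetaB τ σ s (lamR3 τ u) + (Kconst τ s : ℂ))‖ ^ p) ^ (1 / p) ≤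
          C * Real.exp (-2 * τ * (1 - K₁) * σ)) ∧
        ∀ u : ℝ, 0 ≤ u →
          ‖Complex.exp (ThetaB τ σ s (lamR3 τ u) + (Kconst τ s : ℂ))‖ ≤
            C * Real.exp (-2 * τ * (1 - K₁) * σ) := by
  refine ⟨4 * Real.exp (2 / 3 * τ ^ 3), by positivity, max 1 (3 * τ ^ 2 / (1 - K₁)),
    one_pos.trans_le (le_max_left _ _), fun σ hσ s hs => ?_⟩
  have hσ1 : 1 ≤ σ := (le_max_left _ _).trans hσ
  have hσ2 : 3 * τ ^ 2 ≤ (1 - K₁) * σ := by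
    rw [← div_le_iff₀' (sub_pos.mpr hK₁1)]
    exact (le_max_right _ _).trans hσ
  set A := Real.exp (2 / 3 * τ ^ 3) * Real.exp (-2 * τ * (1 - K₁) * σ) with hA
  have hdecay : Real.exp (2 / 3 * τ ^ 3 - 2 * σ * τ) ≤ A := by
    rw [hA, ← Real.exp_add, Real.exp_le_exp]
    nlinarith [mul_pos (mul_pos hτ hK₁0) (one_pos.trans_le hσ1)]
  have hbound : ∀ u, 0 ≤ u →
      ‖Complex.exp (ThetaB τ σ s (lamR3 τ u) + (Kconst τ s : ℂ))‖ ≤ A * Real.exp (-(1 / 4) * u) :=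
    fun u hu => (norm_exp_jump_le hτ.le hu (linear_coeff_le_neg_one hK₁1 hσ1 hσ2 hs)).trans
      (by gcongr)
  rw [mul_assoc]
  refine ⟨?_, fun u hu => ?_⟩
  · exact (rpow_integral_Ioi_rpow_le_of_le_mul_exp (by norm_num) (by norm_num) hp
      fun u hu => ⟨norm_nonneg _, hbound u hu.le⟩).trans_eq (by ring)
  · calc _ ≤ A * Real.exp (-(1 / 4) * u) := hbound u hu
      _ ≤ A := mul_le_of_le_one_right (by positivity) (Real.exp_le_one_iff.mpr (by linarith))
      _ ≤ 4 * A := by linarith [show 0 < A by positivity]
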